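/- arXiv:2210.01019 — 5 statements merged into one kernel-verified Lean document; each statement's English description precedes it below -/
import Mathlib

section
/- Let T be a nonzero symmetric third-order tensor on R^d and f(x,z) = -T(x,x,x) + ||x||^4 + z^4. If (x*, z*) minimizes f globally, then x*/||x*|| maximizes v -> T(v,v,v) over unit vectors v. -/
/-- If `T` is a nonzero symmetric trilinear form on `ℝ^d` and `(x*, z*)` is a global
minimizer of `f (x, z) = -T x x x + ‖x‖^4 + z^4`, then `x*` is nonzero and
`x*/‖x*‖` maximizes `v ↦ T v v v` over unit vectors. -/
theorem stmt_1 (d : ℕ)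
    (T : EuclideanSpace ℝ (Fin d) →ₗ[ℝ] EuclideanSpace ℝ (Fin d) →ₗ[ℝ]
      EuclideanSpace ℝ (Fin d) →ₗ[ℝ] ℝ)
    (hsymm1 : ∀ x y z, T x y z = T y x z)
    (hsymm2 : ∀ x y z, T x y z = T x z y)
    (hnz : ∃ v : EuclideanSpace ℝ (Fin d), ‖v‖ = 1 ∧ 0 < T v v v)
    (xs : EuclideanSpace ℝ (Fin d)) (zs : ℝ)
    (hmin : ∀ (x : EuclideanSpace ℝ (Fin d)) (z : ℝ),
      -T xs xs xs + ‖xs‖ ^ 4 + zs ^ 4 ≤ -T x x x + ‖x‖ ^ 4 + z ^ 4) :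
    xs ≠ 0 ∧ ∀ v : EuclideanSpace ℝ (Fin d), ‖v‖ = 1 →
      T v v v ≤ T (‖xs‖⁻¹ • xs) (‖xs‖⁻¹ • xs) (‖xs‖⁻¹ • xs) := by
  obtain ⟨v, hv, hc⟩ := hnz
  have Tcube : ∀ (t : ℝ) (w : EuclideanSpace ℝ (Fin d)),
      T (t • w) (t • w) (t • w) = t ^ 3 * T w w w := by
    intro t w
    simp only [map_smul, LinearMap.smul_apply, smul_eq_mul]
    ring
  -- upper bound from test points
  have key : ∀ (u : EuclideanSpace ℝ (Fin d)), ‖u‖ = 1 → 0 < T u u u →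
      -T xs xs xs + ‖xs‖ ^ 4 + zs ^ 4 ≤ -(27/256) * (T u u u) ^ 4 := by
    intro u hu hpos
    have h := hmin ((3 * T u u u / 4) • u) 0
    have hn : ‖(3 * T u u u / 4) • u‖ = 3 * T u u u / 4 := by
      rw [norm_smul, hu, mul_one, Real.norm_eq_abs, abs_of_pos (by positivity)]
    rw [Tcube, hn] at h
    nlinarith [h]
  have hz4 : (0:ℝ) ≤ zs ^ 4 := by positivity
  have hx4 : (0:ℝ) ≤ ‖xs‖ ^ 4 := by positivity
  have hneg : -T xs xs xs + ‖xs‖ ^ 4 + zs ^ 4 < 0 := by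
    have := key v hv hc
    nlinarith [pow_pos hc 4]
  have hTxs : 0 < T xs xs xs := by linarith
  have hxs : xs ≠ 0 := by
    intro h
    rw [h] at hTxs
    simp at hTxs
  have hr : 0 < ‖xs‖ := norm_pos_iff.mpr hxs
  set r := ‖xs‖ with hrdef
  set u := r⁻¹ • xs with hudef
  have hxu : xs = r • u := by
    rw [hudef, smul_smul, mul_inv_cancel₀ (ne_of_gt hr), one_smul]
  have hTx : T xs xs xs = r ^ 3 * T u u u := by
    rw [hxu] at hTxs ⊢
    exact Tcube r u
  have ha : 0 < T u u u := by
    rw [hTx] at hTxs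
    nlinarith [pow_pos hr 3]
  refine ⟨hxs, fun w hw => ?_⟩
  set a := T u u u with hadef
  set c := T w w w with hcdef
  by_cases hcpos : 0 < c
  · -- lower bound: f* ≥ -27/256 a^4, upper bound f* ≤ -27/256 c^4
    have hub := key w hw hcpos
    have hlb : -(27/256) * a ^ 4 ≤ -T xs xs xs + r ^ 4 + zs ^ 4 := by
      rw [hTx]
      nlinarith [mul_nonneg (sq_nonneg (4*r - 3*a)) (sq_nonneg (4*r + a)),
        mul_nonneg (sq_nonneg (4*r - 3*a)) (sq_nonneg a), hz4]
    have h4 : c ^ 4 ≤ a ^ 4 := by linarith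
    exact (pow_le_pow_iff_left₀ hcpos.le ha.le (by norm_num)).mp h4
  · linarith [not_lt.mp hcpos]
end

section
/- Let T be a symmetric third-order tensor on R^d with Frobenius norm 1, and let p = max over unit vectors v of T(v,v,v), assumed positive. Define f(x,z) = -T(x,x,x) + ||x||^4 + z^4 and gamma(alpha) = f(alpha x*, (1-alpha) z0) where x* is a global minimizer direction scaled so that ||x*|| = 3p/4 and T(x*/||x*||, x*/||x*||, x*/||x*||) = p, and |z0| > 3*sqrt(2)/4. Then gamma''(alpha) > 0 for all alpha in [0,1], i.e., gamma is strictly convex on [0,1]. -/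
/-!
With `s = 3p/4` the second derivative is
`γ''(α) = p⁴ (243/64 α² - 81/32 α) + 12 (1 - α)² z⁴`.
Since `p⁴ ≤ 1` and `z⁴ ≥ 81/64`, the last term is at least `(81/64) p⁴ · 12 (1 - α)²`, so
`γ''(α) ≥ (81/64) p⁴ (15 α² - 26 α + 12)`, a quadratic with negative discriminant.
Hence `γ'' > 0` on all of `ℝ`, and `γ` is strictly convex.
-/

/-- `lossPath p s z α = f(α x*, (1 - α) z)`, where `‖x*‖ = s` and `T(x*, x*, x*) = s³ p`. -/
def lossPath (p s z α : ℝ) : ℝ :=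
  -α ^ 3 * s ^ 3 * p + α ^ 4 * s ^ 4 + (1 - α) ^ 4 * z ^ 4

section Derivatives

variable (p s z x : ℝ)

lemma hasDerivAt_lossPath :
    HasDerivAt (lossPath p s z)
      (-(3 * x ^ 2) * s ^ 3 * p + 4 * x ^ 3 * s ^ 4 - 4 * (1 - x) ^ 3 * z ^ 4) x := by
  have h := ((((hasDerivAt_pow 3 x).neg.mul_const (s ^ 3)).mul_const p).add
    ((hasDerivAt_pow 4 x).mul_const (s ^ 4))).add
    ((((hasDerivAt_id x).const_sub 1).pow 4).mul_const (z ^ 4))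
  refine h.congr_deriv ?_
  simp only [id, Nat.cast_ofNat]
  ring

lemma hasDerivAt_deriv_lossPath :
    HasDerivAt (deriv (lossPath p s z))
      (-6 * x * s ^ 3 * p + 12 * x ^ 2 * s ^ 4 + 12 * (1 - x) ^ 2 * z ^ 4) x := by
  have h := (((((hasDerivAt_pow 2 x).const_mul 3).neg.mul_const (s ^ 3)).mul_const p).add
    (((hasDerivAt_pow 3 x).const_mul 4).mul_const (s ^ 4))).sub
    (((((hasDerivAt_id x).const_sub 1).pow 3).const_mul 4).mul_const (z ^ 4))
  rw [funext fun y => (hasDerivAt_lossPath p s z y).deriv]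
  refine h.congr_deriv ?_
  simp only [id, Nat.cast_ofNat]
  ring

lemma iterate_deriv_two_lossPath :
    deriv^[2] (lossPath p s z) x
      = -6 * x * s ^ 3 * p + 12 * x ^ 2 * s ^ 4 + 12 * (1 - x) ^ 2 * z ^ 4 :=
  (hasDerivAt_deriv_lossPath p s z x).deriv

end Derivatives

lemma weighted_quadratic_pos {q w : ℝ} (hq0 : 0 < q) (hq1 : q ≤ 1) (hw : 81 / 64 ≤ w) (α : ℝ) :
    0 < q * (243 / 64 * α ^ 2 - 81 / 32 * α) + 12 * (1 - α) ^ 2 * w := by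
  have hquad : 0 < 15 * α ^ 2 - 26 * α + 12 := by nlinarith [sq_nonneg (15 * α - 13)]
  nlinarith [mul_nonneg (sq_nonneg (1 - α)) (sub_nonneg.2 hw),
    mul_nonneg (sq_nonneg (1 - α)) (sub_nonneg.2 hq1), mul_pos hq0 hquad]

lemma deriv_two_lossPath_pos {p s z : ℝ} (hp0 : 0 < p) (hp1 : p ≤ 1) (hs : s = 3 * p / 4)
    (hz : 81 / 64 ≤ z ^ 4) (α : ℝ) :
    0 < -6 * α * s ^ 3 * p + 12 * α ^ 2 * s ^ 4 + 12 * (1 - α) ^ 2 * z ^ 4 := by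
  have h := weighted_quadratic_pos (pow_pos hp0 4) (pow_le_one₀ hp0.le hp1) hz α
  subst hs
  linear_combination h

lemma Even.pow_le_pow_of_le_abs {n : ℕ} (hn : Even n) {a z : ℝ} (ha : 0 ≤ a) (h : a ≤ |z|) :
    a ^ n ≤ z ^ n :=
  hn.pow_abs z ▸ pow_le_pow_left₀ ha h n

lemma three_mul_sqrt_two_div_four_pow_four : (3 * Real.sqrt 2 / 4) ^ 4 = 81 / 64 := by
  rw [show (3 * Real.sqrt 2 / 4) ^ 4 = 81 * Real.sqrt 2 ^ 2 * Real.sqrt 2 ^ 2 / 256 by ring,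
    Real.sq_sqrt zero_le_two]
  norm_num

/-- Convexity of the loss interpolation for the hard tensor example:
with `0 < p ≤ 1`, `s = 3p/4` and `|z0| > 3√2/4`, the curve
`γ(α) = -α^3 s^3 p + α^4 s^4 + (1-α)^4 z0^4` has positive second derivative
`-6 α s^3 p + 12 α^2 s^4 + 12 (1-α)^2 z0^4` on `[0,1]`, and is strictly convex
on `[0,1]`. -/
theorem stmt_3 (p s z0 : ℝ) (hp0 : 0 < p) (hp1 : p ≤ 1) (hs : s = 3 * p / 4)
    (hz0 : 3 * Real.sqrt 2 / 4 < |z0|) :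
    (∀ α ∈ Set.Icc (0 : ℝ) 1,
      0 < -6 * α * s ^ 3 * p + 12 * α ^ 2 * s ^ 4 + 12 * (1 - α) ^ 2 * z0 ^ 4) ∧
    StrictConvexOn ℝ (Set.Icc (0 : ℝ) 1)
      (fun α => -α ^ 3 * s ^ 3 * p + α ^ 4 * s ^ 4 + (1 - α) ^ 4 * z0 ^ 4) := by
  have hz : 81 / 64 ≤ z0 ^ 4 := three_mul_sqrt_two_div_four_pow_four ▸
    (even_two_mul 2).pow_le_pow_of_le_abs (by positivity) hz0.le
  have hpos := deriv_two_lossPath_pos hp0 hp1 hs hz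
  refine ⟨fun α _ => hpos α, ?_⟩
  have hconvex : StrictConvexOn ℝ Set.univ (lossPath p s z0) :=
    strictConvexOn_univ_of_deriv2_pos (by unfold lossPath; fun_prop) fun x => by
      rw [iterate_deriv_two_lossPath]
      exact hpos x
  exact hconvex.subset (Set.subset_univ _) (convex_Icc 0 1)
end

section
/- Define f(x,y) = (1 - y/(3 sqrt(x^2+y^2)))((x^2+y^2)^2 - 2(x^2+y^2)) for (x,y) != (0,0) and f(0,0)=0. For every beta in [-pi/3, pi/3], f(sin(beta/2)cos(beta/2), -sin(beta/2)sin(beta/2)) - f(sin(beta), cos(beta)) >= 5/32. In particular, the linear interpolation from (sin beta, cos beta) to the global minimizer (0,-1) has a point with loss strictly higher (by at least 5/32) than a point earlier on the path, so the loss interpolation is non-monotonic. -/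
/-!
On the unit circle the loss is `cos β / 3 - 1 ≤ -2/3`. The midpoint of the segment from
`(sin β, cos β)` to `(0, -1)` is `(s cos(β/2), -s²)` with `s = sin(β/2)`; it lies on the circle of
radius `|s| ≤ 1/2`, where the loss equals `(1 + |s|/3)(s⁴ - 2s²) ≥ -49/96`.
The gap is at least `-49/96 + 2/3 = 5/32`.
-/

open Real

noncomputable def easyLoss (x y : ℝ) : ℝ :=
  if x = 0 ∧ y = 0 then 0
  else (1 - y / (3 * √(x ^ 2 + y ^ 2))) * ((x ^ 2 + y ^ 2) ^ 2 - 2 * (x ^ 2 + y ^ 2))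

lemma easyLoss_of_sq_add_sq_eq {x y r : ℝ} (hr : 0 < r) (hxy : x ^ 2 + y ^ 2 = r ^ 2) :
    easyLoss x y = (1 - y / (3 * r)) * (r ^ 4 - 2 * r ^ 2) := by
  have hne : ¬(x = 0 ∧ y = 0) := by
    rintro ⟨rfl, rfl⟩
    nlinarith
  rw [easyLoss, if_neg hne, hxy, sqrt_sq hr.le]
  ring

lemma easyLoss_sin_cos (β : ℝ) : easyLoss (sin β) (cos β) = cos β / 3 - 1 := by
  rw [easyLoss_of_sq_add_sq_eq one_pos (by rw [sin_sq_add_cos_sq, one_pow])]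
  ring

lemma easyLoss_mul_neg_mul_self {s c : ℝ} (h : s ^ 2 + c ^ 2 = 1) :
    easyLoss (s * c) (-s * s) = (1 + |s| / 3) * (|s| ^ 4 - 2 * |s| ^ 2) := by
  rcases eq_or_ne s 0 with rfl | hs
  · simp [easyLoss]
  have habs : 0 < |s| := abs_pos.mpr hs
  rw [easyLoss_of_sq_add_sq_eq habs (by rw [sq_abs]; linear_combination s ^ 2 * h)]
  have hself : -s * s / (3 * |s|) = -(|s| / 3) := by
    rw [neg_mul, ← abs_mul_abs_self s]
    field_simp
  rw [hself, sub_neg_eq_add]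

lemma neg_49_div_96_le_of_le_half {s : ℝ} (h0 : 0 ≤ s) (h1 : s ≤ 1 / 2) :
    -(49 / 96) ≤ (1 + s / 3) * (s ^ 4 - 2 * s ^ 2) := by
  nlinarith [mul_nonneg (sub_nonneg.mpr h1) (mul_nonneg h0 h0),
    mul_nonneg (sub_nonneg.mpr h1) (mul_nonneg h0 (mul_nonneg h0 h0)),
    mul_nonneg (sub_nonneg.mpr h1) h0]

lemma abs_sin_half_le_half {β : ℝ} (hβ : β ∈ Set.Icc (-(π / 3)) (π / 3)) :
    |sin (β / 2)| ≤ 1 / 2 := by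
  have hcos : 1 / 2 ≤ cos β := by
    rw [← cos_pi_div_three, ← cos_abs β]
    exact cos_le_cos_of_nonneg_of_le_pi (abs_nonneg β) (by linarith [pi_pos]) (abs_le.mpr hβ)
  have hsq : sin (β / 2) ^ 2 = (1 - cos β) / 2 := by
    have hdouble := cos_two_mul (β / 2)
    rw [mul_div_cancel₀ β two_ne_zero] at hdouble
    linarith [cos_sq_add_sin_sq (β / 2)]
  rw [← abs_eq_self.mpr (by norm_num : (0 : ℝ) ≤ 1 / 2)]
  exact sq_le_sq.mp (by rw [hsq]; linarith)

/-- The loss interpolation for the easy example is non-monotonic: for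
`β ∈ [-π/3, π/3]`, the midpoint of the segment from `(sin β, cos β)` to the
global minimizer `(0,-1)` has `f`-value at least `5/32` larger than the
starting point `(sin β, cos β)`. -/
theorem stmt_6
    (f : ℝ → ℝ → ℝ)
    (hf : ∀ x y : ℝ, f x y =
      if x = 0 ∧ y = 0 then 0
      else (1 - y / (3 * Real.sqrt (x ^ 2 + y ^ 2))) *
        ((x ^ 2 + y ^ 2) ^ 2 - 2 * (x ^ 2 + y ^ 2))) :
    ∀ β ∈ Set.Icc (-(π / 3)) (π / 3),
      f (Real.sin (β / 2) * Real.cos (β / 2)) (-Real.sin (β / 2) * Real.sin (β / 2)) -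
        f (Real.sin β) (Real.cos β) ≥ 5 / 32 := by
  obtain rfl : f = easyLoss := funext fun x => funext fun y => hf x y
  intro β hβ
  have hmid : -(49 / 96) ≤ easyLoss (sin (β / 2) * cos (β / 2)) (-sin (β / 2) * sin (β / 2)) := by
    rw [easyLoss_mul_neg_mul_self (sin_sq_add_cos_sq _)]
    exact neg_49_div_96_le_of_le_half (abs_nonneg _) (abs_sin_half_le_half hβ)
  rw [easyLoss_sin_cos]
  linarith [cos_le_one β]
end

section
/- Let k >= 2 and let b_1,...,b_k be real numbers. Consider a 'balanced tuple' (one sample per class) in which, for each sample i in [k], the logits are f_j^{(i)} = c_{i,j} + b_j with c_{i,j} in [0, e*epsilon] for all j. Then the cross-entropy loss of this balanced tuple satisfies: sum over i in [k] of log( (sum_j exp(f_j^{(i)})) / exp(f_i^{(i)}) ) >= k (log k - e*epsilon). -/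
/-- Lower bound on the cross-entropy loss of a balanced tuple with perturbed
logits: with one sample per class, logits `f_j^{(i)} = c_{i,j} + b_j` and
`0 ≤ c_{i,j} ≤ e·ε`, the total loss is at least `k (log k - e·ε)`. -/
theorem stmt_9 (k : ℕ) (hk : 2 ≤ k) (ε : ℝ) (b : Fin k → ℝ) (c : Fin k → Fin k → ℝ)
    (hc : ∀ i j, 0 ≤ c i j ∧ c i j ≤ Real.exp 1 * ε) :
    (k : ℝ) * (Real.log k - Real.exp 1 * ε) ≤
      ∑ i : Fin k,
        Real.log ((∑ j : Fin k, Real.exp (c i j + b j)) / Real.exp (c i i + b i)) := by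
  have hk0 : (0:ℝ) < k := by positivity
  set S : ℝ := ∑ j : Fin k, Real.exp (b j) with hS
  have hSpos : 0 < S := Finset.sum_pos (fun j _ => Real.exp_pos _) ⟨⟨0, by omega⟩, Finset.mem_univ _⟩
  -- Jensen: exp((∑ b)/k) ≤ S/k
  have hjensen : Real.exp (∑ i : Fin k, (k:ℝ)⁻¹ * b i) ≤ ∑ i : Fin k, (k:ℝ)⁻¹ * Real.exp (b i) := by
    simpa [smul_eq_mul] using
      convexOn_exp.map_sum_le (t := Finset.univ) (w := fun _ : Fin k => (k:ℝ)⁻¹) (p := b)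
        (fun i _ => by positivity)
        (by simp [Finset.card_univ]; field_simp)
        (fun i _ => Set.mem_univ _)
  have hsum : ∑ i : Fin k, b i ≤ (k:ℝ) * Real.log S - (k:ℝ) * Real.log k := by
    have h1 : (k:ℝ)⁻¹ * ∑ i : Fin k, b i ≤ Real.log (S / k) := by
      simp only [← Finset.mul_sum] at hjensen
      have := Real.log_le_log (Real.exp_pos _) hjensen
      rw [Real.log_exp] at this
      calc (k:ℝ)⁻¹ * ∑ i : Fin k, b i ≤ Real.log ((k:ℝ)⁻¹ * S) := this
        _ = Real.log (S / k) := by rw [inv_mul_eq_div, div_eq_mul_inv, mul_comm S, inv_mul_eq_div]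
    rw [Real.log_div (ne_of_gt hSpos) (ne_of_gt hk0)] at h1
    have := mul_le_mul_of_nonneg_left h1 (le_of_lt hk0)
    rw [← mul_assoc, mul_inv_cancel₀ (ne_of_gt hk0), one_mul] at this
    linarith [this]
  -- per-term bound
  have hterm : ∀ i : Fin k,
      Real.log S - b i - Real.exp 1 * ε ≤
      Real.log ((∑ j : Fin k, Real.exp (c i j + b j)) / Real.exp (c i i + b i)) := by
    intro i
    have hnum : S ≤ ∑ j : Fin k, Real.exp (c i j + b j) :=
      Finset.sum_le_sum fun j _ => Real.exp_le_exp.2 (by linarith [(hc i j).1])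
    have hnpos : 0 < ∑ j : Fin k, Real.exp (c i j + b j) := lt_of_lt_of_le hSpos hnum
    rw [Real.log_div (ne_of_gt hnpos) (ne_of_gt (Real.exp_pos _)), Real.log_exp]
    have := Real.log_le_log hSpos hnum
    have hcii := (hc i i).2
    linarith
  calc (k:ℝ) * (Real.log k - Real.exp 1 * ε)
      ≤ ∑ i : Fin k, (Real.log S - b i - Real.exp 1 * ε) := by
        rw [Finset.sum_sub_distrib, Finset.sum_sub_distrib, Finset.sum_const, Finset.sum_const,
          Finset.card_univ, Fintype.card_fin, nsmul_eq_mul, nsmul_eq_mul]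
        have h2 : (k:ℝ) * (Real.log k - Real.exp 1 * ε)
            = (k:ℝ) * Real.log k - (k:ℝ) * (Real.exp 1 * ε) := by ring
        rw [h2]
        linarith
    _ ≤ _ := Finset.sum_le_sum fun i _ => hterm i
end

section
/- Consider the error interpolation lower bound computation: let Delta > 0, r >= 3 an integer, delta > 0 with delta < (1/(2e))^{2/(r-2)} and delta <= 1/r^2, and V > 0. For alpha in [delta/Delta, sqrt(delta)/V), one has alpha * Delta - 2*(delta + alpha*V)^r > 0. -/
/-- Error-interpolation lower bound computation: for `Δ > 0`, integer `r ≥ 3`,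
`δ > 0` with `δ < (1/(2e))^{2/(r-2)}` and `δ ≤ 1/r²`, and `V > 0`, every
`α ∈ [δ/Δ, √δ/V)` satisfies `α Δ - 2 (δ + α V)^r > 0`. -/
theorem stmt_12 (r : ℕ) (hr : 3 ≤ r) (Δ δ V : ℝ) (hΔ : 0 < Δ) (hδ0 : 0 < δ)
    (hδ1 : δ < (1 / (2 * Real.exp 1)) ^ ((2 : ℝ) / ((r : ℝ) - 2)))
    (hδ2 : δ ≤ 1 / (r : ℝ) ^ 2) (hV : 0 < V) :
    ∀ α : ℝ, δ / Δ ≤ α → α < Real.sqrt δ / V →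
      0 < α * Δ - 2 * (δ + α * V) ^ r := by
  intro α hα1 hα2
  set c := (r : ℝ) with hcdef
  have hc : (3:ℝ) ≤ c := by rw [hcdef]; exact_mod_cast hr
  have hc0 : (0:ℝ) < c := by linarith
  have hα0 : 0 < α := lt_of_lt_of_le (div_pos hδ0 hΔ) hα1
  have h1 : δ ≤ α * Δ := (div_le_iff₀ hΔ).mp hα1
  have h2 : α * V < Real.sqrt δ := (lt_div_iff₀ hV).mp hα2
  have hs_le : Real.sqrt δ ≤ 1 / c := by
    have : Real.sqrt (1 / c ^ 2) = 1 / c := by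
      rw [one_div, Real.sqrt_inv, Real.sqrt_sq hc0.le, one_div]
    rw [← this]
    exact Real.sqrt_le_sqrt hδ2
  have h3 : δ ≤ Real.sqrt δ * (1 / c) := by
    nth_rewrite 1 [← Real.mul_self_sqrt hδ0.le]
    exact mul_le_mul_of_nonneg_left hs_le (Real.sqrt_nonneg δ)
  have h4 : δ + α * V < (1 + 1 / c) * Real.sqrt δ := by
    have hexp : (1 + 1 / c) * Real.sqrt δ = Real.sqrt δ * (1 / c) + Real.sqrt δ := by ring
    linarith
  have hpos : 0 < δ + α * V := by positivity
  have hpow : (δ + α * V) ^ r < ((1 + 1 / c) * Real.sqrt δ) ^ r :=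
    pow_lt_pow_left₀ h4 hpos.le (by omega)
  have h6 : (1 + 1 / c) ^ r ≤ Real.exp 1 := by
    have h61 : (1 + 1 / c) ≤ Real.exp (1 / c) := by
      have := Real.add_one_le_exp (1 / c); linarith
    calc (1 + 1 / c) ^ r ≤ (Real.exp (1 / c)) ^ r :=
          pow_le_pow_left₀ (by positivity) h61 r
      _ = Real.exp (c * (1 / c)) := by rw [← Real.exp_nat_mul]
      _ = Real.exp 1 := by rw [mul_one_div, div_self hc0.ne']
  have h7 : Real.sqrt δ ^ r = δ ^ (c / 2) := by
    rw [Real.sqrt_eq_rpow, ← Real.rpow_natCast (δ ^ ((1:ℝ)/2)) r, ← Real.rpow_mul hδ0.le]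
    congr 1
    ring
  have hc2 : 0 < (c - 2) / 2 := by linarith
  have h8 : δ ^ ((c - 2) / 2) < 1 / (2 * Real.exp 1) := by
    have h81 := Real.rpow_lt_rpow hδ0.le hδ1 hc2
    rwa [← Real.rpow_mul (by positivity), div_mul_div_comm,
      show 2 * (c - 2) = (c - 2) * 2 by ring,
      div_self (ne_of_gt (by linarith : (0:ℝ) < (c - 2) * 2)), Real.rpow_one] at h81
  have h9 : δ ^ (c / 2) = δ * δ ^ ((c - 2) / 2) := by
    have : c / 2 = 1 + (c - 2) / 2 := by ring
    rw [this, Real.rpow_add hδ0, Real.rpow_one]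
  have key : 2 * (δ + α * V) ^ r < δ := by
    have ha : ((1 + 1 / c) * Real.sqrt δ) ^ r = (1 + 1 / c) ^ r * δ ^ (c / 2) := by
      rw [mul_pow, h7]
    have hb : (1 + 1 / c) ^ r * δ ^ (c / 2) ≤ Real.exp 1 * δ ^ (c / 2) :=
      mul_le_mul_of_nonneg_right h6 (Real.rpow_nonneg hδ0.le _)
    have hd : Real.exp 1 * δ ^ (c / 2) = Real.exp 1 * δ * δ ^ ((c - 2) / 2) := by
      rw [h9]; ring
    have he : 2 * (Real.exp 1 * δ * δ ^ ((c - 2) / 2)) < δ := by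
      have hm := mul_lt_mul_of_pos_left h8
        (show (0:ℝ) < 2 * Real.exp 1 * δ by positivity)
      have heq : 2 * Real.exp 1 * δ * (1 / (2 * Real.exp 1)) = δ := by
        field_simp
      nlinarith
    nlinarith [hpow]
  linarith
end
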